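/- Let M be a simple, cosimple, connected matroid, let F = (x_1, …, x_k) be a fan of M, and let (A,B) be a 2-separation of M. Then M has a 2-separation (A', B') with {x_1, …, x_k} ⊆ A'. -/

import Mathlib

open Matroid Set

namespace ExMinors

variable {α β γ : Type}

/-! ### Basic matroid notions -/

/-- The (extended, `ℕ∞`-valued) rank of a set `X` in a matroid `M`: the supremum of the
cardinalities of independent subsets of `X`. -/
noncomputable def eRank (M : Matroid α) (X : Set α) : ℕ∞ :=
  ⨆ I ∈ {I | M.Indep I ∧ I ⊆ X}, I.encard

/-- `(A, B)` is a 2-separation of `M`: a partition of the ground set into two parts of size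
at least two with `r A + r B ≤ r M + 1`. -/
def TwoSep (M : Matroid α) (A B : Set α) : Prop :=
  A ∪ B = M.E ∧ Disjoint A B ∧ 2 ≤ A.encard ∧ 2 ≤ B.encard ∧
    eRank M A + eRank M B ≤ eRank M M.E + 1

/-- `C` is a circuit of `M` : a minimal dependent set. -/
def IsCircuitM (M : Matroid α) (C : Set α) : Prop :=
  C ⊆ M.E ∧ ¬ M.Indep C ∧ ∀ x ∈ C, M.Indep (C \ {x})

/-- A matroid is connected if it is nonempty and every two distinct elements of the
ground set lie on a common circuit. -/
def ConnectedM (M : Matroid α) : Prop :=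
  M.E.Nonempty ∧ ∀ e ∈ M.E, ∀ f ∈ M.E, e = f ∨ ∃ C, IsCircuitM M C ∧ e ∈ C ∧ f ∈ C

/-- A matroid is 3-connected if it is connected and has no 2-separation. -/
def ThreeConnected (M : Matroid α) : Prop :=
  ConnectedM M ∧ ∀ A B, ¬ TwoSep M A B

/-- A matroid is simple if every subset of the ground set with at most two elements
is independent. -/
def SimpleM (M : Matroid α) : Prop :=
  ∀ e ∈ M.E, ∀ f ∈ M.E, M.Indep {e, f}

def CosimpleM (M : Matroid α) : Prop := SimpleM M✶

/-! ### Minors -/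

/-- Deletion of the set `D` from `M`. -/
def del (M : Matroid α) (D : Set α) : Matroid α := M ↾ (M.E \ D)

/-- Contraction of the set `C` in `M`, defined by duality. -/
def con (M : Matroid α) (C : Set α) : Matroid α := (del M✶ C)✶

/-- `N` is a minor of `M`. -/
def IsMinor (N M : Matroid α) : Prop := ∃ C D : Set α, N = del (con M C) D

/-! ### Isomorphism -/

/-- `φ` is an isomorphism from `M` to `N`: a bijection between the ground sets which
preserves independence. -/
def MIsoVia (M : Matroid α) (N : Matroid β) (φ : α → β) : Prop :=
  Set.BijOn φ M.E N.E ∧ ∀ I ⊆ M.E, (M.Indep I ↔ N.Indep (φ '' I))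

/-- `M` and `N` are isomorphic matroids. -/
def MIso (M : Matroid α) (N : Matroid β) : Prop := ∃ φ, MIsoVia M N φ

/-- `φ` is an automorphism of `M`. -/
def IsAuto (M : Matroid α) (φ : α → α) : Prop := MIsoVia M M φ

/-- `M` has a minor isomorphic to the matroid `N`. -/
def HasMinorIso (M : Matroid α) (N : Matroid β) : Prop :=
  ∃ N' : Matroid α, IsMinor N' M ∧ MIso N' N

/-! ### Representations -/

/-- `M` is the matroid on ground set `range g` (with `g` injective) represented by the
family of column vectors `cols`. -/
def ReppedBy {ι F : Type} [Field F] {n : ℕ} (M : Matroid α) (cols : ι → Fin n → F)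
    (g : ι → α) : Prop :=
  Function.Injective g ∧ M.E = Set.range g ∧
    ∀ J : Set ι, (M.Indep (g '' J) ↔ LinearIndependent F (J.restrict cols))

/-- `M` is isomorphic to the matroid of the `k` columns `cols` over the field `F`. -/
def IsColM {F : Type} [Field F] {k n : ℕ} (cols : Fin k → Fin n → F) (M : Matroid α) : Prop :=
  ∃ g : Fin k → α, ReppedBy M cols g

/-- `M` is representable over the field `F` (by vectors in some finite power of `F`). -/
def RepOver (F : Type) [Field F] (M : Matroid α) : Prop :=
  ∃ (n : ℕ) (v : α → Fin n → F), ∀ I ⊆ M.E, (M.Indep I ↔ LinearIndependent F (I.restrict v))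

/-! ### Named matroids -/

/-- `M` is isomorphic to the uniform matroid `U_{m,n}`. -/
def IsUniform (m n : ℕ) (M : Matroid α) : Prop :=
  M.E.Finite ∧ M.E.ncard = n ∧ ∀ I ⊆ M.E, (M.Indep I ↔ I.ncard ≤ m)

/-- The columns of a `GF(2)`-representation of the Fano matroid `F₇`. -/
def fanoCols : Fin 7 → Fin 3 → ZMod 2 :=
  ![![1,0,0], ![0,1,0], ![0,0,1], ![0,1,1], ![1,0,1], ![1,1,0], ![1,1,1]]

/-- `M` is isomorphic to the Fano matroid `F₇`. -/
def IsF7 (M : Matroid α) : Prop := IsColM fanoCols M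

/-- `M` is isomorphic to `F₇*`. -/
def IsF7dual (M : Matroid α) : Prop := IsF7 M✶

/-- The columns of a `GF(3)`-representation of the non-Fano matroid `F₇⁻`. -/
def nonFanoCols : Fin 7 → Fin 3 → ZMod 3 :=
  ![![1,0,0], ![0,1,0], ![0,0,1], ![0,1,1], ![1,0,1], ![1,1,0], ![1,1,1]]

/-- `M` is isomorphic to the non-Fano matroid `F₇⁻`. -/
def IsNonFano (M : Matroid α) : Prop := IsColM nonFanoCols M

/-- `M` is isomorphic to `(F₇⁻)*`. -/
def IsNonFanoDual (M : Matroid α) : Prop := IsNonFano M✶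

/-- The columns `[I₄ | A₈]` of the `GF(3)`-representation of `P₈`. -/
def p8Cols : Fin 8 → Fin 4 → ZMod 3 :=
  ![![1,0,0,0], ![0,1,0,0], ![0,0,1,0], ![0,0,0,1],
    ![0,1,1,-1], ![1,0,1,1], ![1,1,0,1], ![-1,1,1,0]]

/-- `M` is isomorphic to `P₈`. -/
def IsP8 (M : Matroid α) : Prop := IsColM p8Cols M

/-- `M` is isomorphic to `P₆`: rank 3, six elements, whose only non-spanning circuit is a
single 3-point line. -/
def IsP6 (M : Matroid α) : Prop :=
  M.E.Finite ∧ M.E.ncard = 6 ∧ ∃ T ⊆ M.E, T.ncard = 3 ∧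
    ∀ I ⊆ M.E, (M.Indep I ↔ I.ncard ≤ 3 ∧ I ≠ T)

/-- The columns of a `GF(3)`-representation of `AG(2,3)`: the nine points `(1, x, y)`. -/
def ag23Cols : Fin 9 → Fin 3 → ZMod 3 :=
  fun j => ![1, ((j : ℕ) % 3 : ZMod 3), ((j : ℕ) / 3 : ZMod 3)]

/-- `M` is isomorphic to the ternary affine plane `AG(2,3)`. -/
def IsAG23 (M : Matroid α) : Prop := IsColM ag23Cols M

/-- The columns of a `GF(3)`-representation of `AG(2,3)\e` (one point deleted). -/
def agdeCols : Fin 8 → Fin 3 → ZMod 3 :=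
  fun j => ![1, ((j : ℕ) % 3 : ZMod 3), ((j : ℕ) / 3 : ZMod 3)]

/-- `M` is isomorphic to `AG(2,3)\e`. -/
def IsAGde (M : Matroid α) : Prop := IsColM agdeCols M

/-- `M` is isomorphic to `(AG(2,3)\e)*`. -/
def IsAGdeDual (M : Matroid α) : Prop := IsAGde M✶

/-- The columns `[I₄ | A]` of the `GF(3)`-representation of `Δ₃(AG(2,3)\e)`, where `A` has
rows `(1,0,-1,0), (1,0,1,1), (1,1,0,1), (0,1,1,-1)`. -/
def deltaAGCols : Fin 8 → Fin 4 → ZMod 3 :=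
  ![![1,0,0,0], ![0,1,0,0], ![0,0,1,0], ![0,0,0,1],
    ![1,1,1,0], ![0,0,1,1], ![-1,1,0,1], ![0,1,1,-1]]

/-- `M` is isomorphic to `Δ₃(AG(2,3)\e)`. -/
def IsDeltaAG (M : Matroid α) : Prop := IsColM deltaAGCols M

/-- `X` is a circuit-hyperplane of `M`. -/
def IsCircuitHyperplane (M : Matroid α) (X : Set α) : Prop :=
  IsCircuitM M X ∧ M.IsFlat X ∧ eRank M X + 1 = eRank M M.E

/-- `M` is isomorphic to `P₈⁼`, obtained from `P₈` by relaxing its two disjoint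
circuit-hyperplanes. -/
def IsP8eq (M : Matroid α) : Prop :=
  ∃ (N : Matroid α) (X Y : Set α), IsP8 N ∧ N.E = M.E ∧
    IsCircuitHyperplane N X ∧ IsCircuitHyperplane N Y ∧ Disjoint X Y ∧
    ∀ B ⊆ M.E, (M.IsBase B ↔ (N.IsBase B ∨ B = X ∨ B = Y))

/-- `M` is isomorphic to the Steiner-system matroid `S(5,6,12)`: a rank-6 paving matroid on
12 elements whose circuit-hyperplanes are the blocks of an `S(5,6,12)` Steiner system. -/
def IsSteiner (M : Matroid α) : Prop :=
  ∃ Bl : Set (Set α), M.E.Finite ∧ M.E.ncard = 12 ∧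
    (∀ b ∈ Bl, b ⊆ M.E ∧ b.ncard = 6) ∧
    (∀ s ⊆ M.E, s.ncard = 5 → ∃! b, b ∈ Bl ∧ s ⊆ b) ∧
    (∀ I ⊆ M.E, (M.Indep I ↔ I.ncard ≤ 6 ∧ I ∉ Bl))

/-! ### Excluded-minor classes and superfluous subsets -/

/-- The class of (finite) matroids on `ℕ` having no minor isomorphic to `P i` for `i ∈ S`. -/
def ExClass {k : ℕ} (P : Fin k → Matroid ℕ → Prop) (S : Finset (Fin k)) : Set (Matroid ℕ) :=
  {M | M.E.Finite ∧ ∀ i ∈ S, ¬ ∃ N, IsMinor N M ∧ P i N}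

/-- With `P` listing the excluded minors of a class, the subset `E'` of the excluded minors
is superfluous if `ex(E − E') − ex(E)` contains only finitely many 3-connected matroids up
to isomorphism. -/
def Superfluous {k : ℕ} (P : Fin k → Matroid ℕ → Prop) (E' : Finset (Fin k)) : Prop :=
  ∃ L : List (Matroid ℕ),
    ∀ M ∈ ExClass P (Finset.univ \ E') \ ExClass P Finset.univ,
      ThreeConnected M → ∃ N ∈ L, MIso M N

/-! ### Lines, triangles, triads and fans -/

/-- `L` is a 3-point line of `M`: a rank-2 flat with exactly three elements. -/
def IsLine3 (M : Matroid α) (L : Set α) : Prop :=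
  M.IsFlat L ∧ eRank M L = 2 ∧ L.encard = 3

/-- A triangle is a 3-element circuit. -/
def IsTriangle (M : Matroid α) (T : Set α) : Prop := IsCircuitM M T ∧ T.encard = 3

/-- A triad is a 3-element cocircuit. -/
def IsTriad (M : Matroid α) (T : Set α) : Prop := IsCircuitM M✶ T ∧ T.encard = 3

/-- `(x 1, …, x k)` is a fan of `M`: an ordered sequence of distinct elements of the ground
set such that each three consecutive elements form a triangle or a triad, and triangles and
triads alternate. -/
def IsFan (M : Matroid α) (k : ℕ) (x : ℕ → α) : Prop :=
  3 ≤ k ∧ Set.InjOn x (Set.Icc 1 k) ∧ (∀ i, 1 ≤ i → i ≤ k → x i ∈ M.E) ∧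
  ∀ i, 1 ≤ i → i + 2 ≤ k →
    ((IsTriangle M {x i, x (i+1), x (i+2)} ∨ IsTriad M {x i, x (i+1), x (i+2)}) ∧
      (i + 3 ≤ k →
        (IsTriangle M {x i, x (i+1), x (i+2)} → IsTriad M {x (i+1), x (i+2), x (i+3)}) ∧
        (IsTriad M {x i, x (i+1), x (i+2)} → IsTriangle M {x (i+1), x (i+2), x (i+3)})))

/-! ### Full closure -/

/-- The full closure of `X`: the intersection of all sets containing `X` that are closed in
both `M` and `M✶`. -/
def Fcl (M : Matroid α) (X : Set α) : Set α :=
  ⋂₀ {Y | X ⊆ Y ∧ M.closure Y = Y ∧ M✶.closure Y = Y}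

/-! ### Wheels and generalized parallel connections -/

/-- The columns of the standard `ℚ`-representation of the rank-`n` wheel `W_n`:
spoke `i` is `e_i`, and rim element `i` is `e_i - e_{i+1}` (indices mod `n`). -/
noncomputable def wheelCols (n : ℕ) : Fin n ⊕ Fin n → Fin n → ℚ
  | .inl i => Pi.single i 1
  | .inr i => Pi.single i 1 - Pi.single ⟨((i : ℕ) + 1) % n, Nat.mod_lt _ i.pos⟩ 1

/-- `W` is a copy of the rank-`n` wheel, with spokes `s 1, …, s n` and rim elements
`r 1, …, r n`, so that `{s i, r i, s (i+1)}` is a triangle and `{r i, s (i+1), r (i+1)}` is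
a triad (indices mod `n`). -/
def IsWheel (W : Matroid α) (n : ℕ) (s r : ℕ → α) : Prop :=
  ReppedBy W (wheelCols n)
    (Sum.elim (fun i : Fin n => s ((i : ℕ) + 1)) (fun i : Fin n => r ((i : ℕ) + 1)))

/-- `P` is the generalized parallel connection of `W` and `M` (over the common restriction
`W.E ∩ M.E`, assumed to be a modular flat of `W`), characterized by its flats:
`F` is a flat of `P` iff `F ∩ W.E` is a flat of `W` and `F ∩ M.E` is a flat of `M`. -/
def IsGPC (W M P : Matroid α) : Prop :=
  P.E = W.E ∪ M.E ∧ ∀ F ⊆ P.E, (P.IsFlat F ↔ W.IsFlat (F ∩ W.E) ∧ M.IsFlat (F ∩ M.E))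

/-- `L = Λ_T^n(M)` for the triangle `T = {x₁, x₂, x₃}` of `M` : the generalized parallel
connection of the wheel `W_n` with `M`, where `s 1, r n, s n` of `W_n` are relabelled
`x₁, x₂, x₃`, with `x₂` deleted. -/
def IsLambdaExt (M : Matroid α) (x₁ x₂ x₃ : α) (n : ℕ) (L : Matroid α) : Prop :=
  ∃ (W P : Matroid α) (s r : ℕ → α), IsWheel W n s r ∧
    s 1 = x₁ ∧ r n = x₂ ∧ s n = x₃ ∧ W.E ∩ M.E = {x₁, x₂, x₃} ∧
    IsGPC W M P ∧ L = del P {x₂}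

/-- `D = Δ_T(M)`, the `Δ-Y` exchange of `M` on the coindependent triangle
`T = {x₁, x₂, x₃}`: the generalized parallel connection of `M(K₄) = W₃` with `M` across
`T`, with `T` deleted. -/
def IsDeltaY (M : Matroid α) (x₁ x₂ x₃ : α) (D : Matroid α) : Prop :=
  ∃ (W P : Matroid α) (s r : ℕ → α), IsWheel W 3 s r ∧
    s 1 = x₁ ∧ r 3 = x₂ ∧ s 3 = x₃ ∧ W.E ∩ M.E = {x₁, x₂, x₃} ∧
    IsGPC W M P ∧ D = del P {x₁, x₂, x₃}

/-- The columns `[I₃ | A]` of the `GF(3)`-representation of the matroid `M₈`, where `A` has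
rows `(1,1,0,1,0), (1,0,1,1,1), (0,1,1,1,-1)`. -/
def m8Cols : Fin 8 → Fin 3 → ZMod 3 :=
  ![![1,0,0], ![0,1,0], ![0,0,1], ![1,1,0], ![1,0,1], ![0,1,1], ![1,1,1], ![0,1,-1]]

/-! Moving one element `e` from `B` to `A` keeps `(A, B)` a 2-separation as long as `e` is spanned
by `A` or is not spanned by `B \ {e}`, and `B` keeps two elements; in a simple, cosimple matroid of
finite rank both sides of a 2-separation have at least three elements. The third element of a
triangle (triad) with two elements in `A` is spanned by `A` (not spanned by the rest of `B`). Two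
of `x₁, x₂, x₃` lie on the same side; moving the third one across if needed, the fan is then swept
into that side one element at a time. -/

section TwoSeparations

variable {M : Matroid α} {A B T X : Set α} {a b c e : α}

lemma eRank_eq_eRk (M : Matroid α) (X : Set α) : eRank M X = M.eRk X := by
  refine le_antisymm (iSup₂_le fun I hI => hI.1.encard_le_eRk_of_subset hI.2) ?_
  obtain ⟨I, hI⟩ := M.exists_isBasis' X
  exact le_iSup₂_of_le I ⟨hI.indep, hI.subset⟩ hI.eRk_eq_encard.le

lemma twoSep_iff : TwoSep M A B ↔ A ∪ B = M.E ∧ Disjoint A B ∧ 2 ≤ A.encard ∧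
    2 ≤ B.encard ∧ M.eRk A + M.eRk B ≤ M.eRank + 1 := by
  simp only [TwoSep, eRank_eq_eRk, eRk_ground]

lemma IsCircuitM.isCircuit {C : Set α} (hC : IsCircuitM M C) : M.IsCircuit C :=
  isCircuit_iff_dep_forall_sdiff_singleton_indep.2 ⟨⟨hC.2.1, hC.1⟩, hC.2.2⟩

lemma TwoSep.symm (h : TwoSep M A B) : TwoSep M B A := by
  obtain ⟨hU, hd, hA, hB, hr⟩ := h
  exact ⟨union_comm A B ▸ hU, hd.symm, hB, hA, add_comm (eRank M A) _ ▸ hr⟩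

lemma TwoSep.mem_or_mem (h : TwoSep M A B) (he : e ∈ M.E) : e ∈ A ∨ e ∈ B :=
  (h.1.symm ▸ he : e ∈ A ∪ B)

lemma TwoSep.three_le_encard_right [M.RankFinite] (hs : SimpleM M) (hcs : CosimpleM M)
    (hAB : TwoSep M A B) : 3 ≤ B.encard := by
  obtain ⟨hU, hd, -, hB2, hr⟩ := twoSep_iff.1 hAB
  by_contra! hB3
  obtain ⟨e, f, hef, rfl⟩ := encard_eq_two.1 (le_antisymm (Order.le_of_lt_add_one hB3) hB2)
  have he : e ∈ M.E := hU ▸ Or.inr (mem_insert e {f})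
  have hf : f ∈ M.E := hU ▸ Or.inr (mem_insert_of_mem e rfl)
  have hA : M.E \ {e, f} = A := by rw [← hU, union_sdiff_right, hd.sdiff_eq_left]
  -- a coindependent pair leaves a spanning complement, so `r(A) + r({e, f}) = r(M) + 2`
  have hrA : M.eRk A = M.eRank := hA ▸ (coindep_def.2 (hcs e he f hf)).compl_spanning.eRk_eq
  have hrB : M.eRk {e, f} = 2 := by rw [(hs e he f hf).eRk_eq_encard, encard_pair hef]
  rw [hrA, hrB] at hr
  have := (ENat.add_le_add_iff_left (M.eRank_ne_top_iff.2 ‹_›)).1 hr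
  norm_num at this

lemma IsCocircuit.notMem_closure_of_disjoint (hT : M.IsCocircuit T) (heT : e ∈ T)
    (hXT : Disjoint X T) : e ∉ M.closure X := by
  -- `E \ T` is a hyperplane: were `e` spanned by it, it would span the spanning set
  -- `E \ (T \ {e})`
  intro heX
  have hTE : T ⊆ M.E := hT.subset_ground
  have hsp : M.Spanning (M.E \ (T \ {e})) :=
    (coindep_def.2 (hT.isCircuit.sdiff_singleton_indep heT)).compl_spanning
  have hsub : M.E \ (T \ {e}) ⊆ M.closure (M.E \ T) := by
    rintro z ⟨hzE, hzT⟩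
    by_cases hz : z = e
    · subst hz
      rw [← M.closure_inter_ground] at heX
      exact M.closure_subset_closure
        (show X ∩ M.E ⊆ M.E \ T from fun y hy => ⟨hy.2, hXT.notMem_of_mem_left hy.1⟩) heX
    · exact M.subset_closure _ sdiff_subset ⟨hzE, fun h => hzT ⟨h, hz⟩⟩
  have hTsp : M.Spanning (M.E \ T) := by
    rw [spanning_iff_closure_eq]
    exact (M.closure_subset_ground _).antisymm
      (hsp.closure_eq.symm.trans_le (M.closure_subset_closure_of_subset_closure hsub))
  have hT' : M.Coindep T := by
    simpa [sdiff_sdiff_cancel_left hTE] using (spanning_iff_compl_coindep sdiff_subset).1 hTsp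
  exact hT.dep.not_indep hT'

lemma TwoSep.insert_sdiff (hAB : TwoSep M A B) (heB : e ∈ B) (hB : 3 ≤ B.encard)
    (he : e ∈ M.closure A ∨ e ∉ M.closure (B \ {e})) : TwoSep M (insert e A) (B \ {e}) := by
  obtain ⟨hU, hd, hA2, -, hr⟩ := twoSep_iff.1 hAB
  have hAE : A ⊆ M.E := hU ▸ subset_union_left
  have hBE : B ⊆ M.E := hU ▸ subset_union_right
  have hr' : M.eRk (insert e A) + M.eRk (B \ {e}) ≤ M.eRk A + M.eRk B := by
    rcases he with he | he
    · gcongr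
      · calc M.eRk (insert e A) ≤ M.eRk (M.closure A) :=
              M.eRk_mono (insert_subset he (M.subset_closure A))
          _ = M.eRk A := M.eRk_closure_eq A
      · exact M.eRk_mono sdiff_subset
    · have hrB : M.eRk B = M.eRk (B \ {e}) + 1 := by
        rw [← eRk_insert_eq_add_one ⟨hBE heB, he⟩, insert_sdiff_singleton,
          insert_eq_of_mem heB]
      rw [hrB, add_comm (M.eRk (B \ {e})), ← add_assoc]
      gcongr
      exact M.eRk_insert_le_add_one e A
  rw [twoSep_iff]
  refine ⟨?_, ?_, hA2.trans (encard_mono (subset_insert e A)), ?_, hr'.trans hr⟩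
  · rw [insert_union, ← union_insert, insert_sdiff_singleton, insert_eq_of_mem heB, hU]
  · exact disjoint_insert_left.2 ⟨fun h => h.2 rfl, hd.mono_right sdiff_subset⟩
  · rw [← encard_sdiff_singleton_add_one heB] at hB
    exact (ENat.add_le_add_iff_right ENat.one_ne_top).1 hB

lemma subset_ground_of_triangle_or_triad (hT : IsTriangle M T ∨ IsTriad M T) : T ⊆ M.E := by
  rcases hT with hT | hT
  exacts [hT.1.1, hT.1.1]

lemma TwoSep.insert_sdiff_of_triangle_or_triad (hAB : TwoSep M A B) (hB : 3 ≤ B.encard)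
    (hT : IsTriangle M T ∨ IsTriad M T) (heT : e ∈ T) (heB : e ∈ B) (hTA : T \ {e} ⊆ A) :
    TwoSep M (insert e A) (B \ {e}) := by
  refine hAB.insert_sdiff heB hB ?_
  rcases hT with hT | hT
  · exact Or.inl
      (M.closure_subset_closure hTA (hT.1.isCircuit.mem_closure_sdiff_singleton_of_mem heT))
  · refine Or.inr (IsCocircuit.notMem_closure_of_disjoint hT.1.isCircuit heT ?_)
    rw [disjoint_iff_forall_ne]
    rintro z ⟨hzB, hze⟩ _ hzT rfl
    exact hAB.2.1.notMem_of_mem_left (hTA ⟨hzT, hze⟩) hzB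

lemma TwoSep.exists_insert_subset [M.RankFinite] (hs : SimpleM M) (hcs : CosimpleM M)
    (hAB : TwoSep M A B) (hT : IsTriangle M {a, b, c} ∨ IsTriad M {a, b, c}) (ha : a ∈ A)
    (hb : b ∈ A) : ∃ A' B', TwoSep M A' B' ∧ insert c A ⊆ A' := by
  rcases hAB.mem_or_mem (subset_ground_of_triangle_or_triad hT (by simp : c ∈ {a, b, c}))
    with hc | hc
  · exact ⟨A, B, hAB, insert_subset hc subset_rfl⟩
  refine ⟨_, _, hAB.insert_sdiff_of_triangle_or_triad (hAB.three_le_encard_right hs hcs) hT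
    (by simp) hc ?_, subset_rfl⟩
  rintro z ⟨hz, hzc⟩
  obtain rfl | rfl | rfl := hz
  exacts [ha, hb, absurd rfl hzc]

lemma TwoSep.exists_pair_subset [M.RankFinite] (hs : SimpleM M) (hcs : CosimpleM M)
    (hAB : TwoSep M A B) (hT : IsTriangle M {a, b, c} ∨ IsTriad M {a, b, c}) :
    ∃ A' B', TwoSep M A' B' ∧ a ∈ A' ∧ b ∈ A' := by
  have hTE := subset_ground_of_triangle_or_triad hT
  wlog hc : c ∈ A generalizing A B with H
  · exact H hAB.symm ((hAB.mem_or_mem (hTE (by simp))).resolve_left hc)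
  by_cases ha : a ∈ A <;> by_cases hb : b ∈ A
  · exact ⟨A, B, hAB, ha, hb⟩
  · obtain ⟨A', B', h, hA'⟩ := hAB.exists_insert_subset (c := b) hs hcs
      (by rwa [pair_comm c b]) ha hc
    exact ⟨A', B', h, hA' (mem_insert_of_mem b ha), hA' (mem_insert b A)⟩
  · obtain ⟨A', B', h, hA'⟩ := hAB.exists_insert_subset (c := a) hs hcs
      (by rwa [pair_comm c a, insert_comm b a]) hb hc
    exact ⟨A', B', h, hA' (mem_insert a A), hA' (mem_insert_of_mem a hb)⟩
  · exact ⟨B, A, hAB.symm, (hAB.mem_or_mem (hTE (by simp))).resolve_left ha,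
      (hAB.mem_or_mem (hTE (by simp))).resolve_left hb⟩

lemma TwoSep.exists_forall_mem_of_triangle_or_triad [M.RankFinite] (hs : SimpleM M)
    (hcs : CosimpleM M) (hAB : TwoSep M A B) {k : ℕ} {x : ℕ → α} (hk : 3 ≤ k)
    (hx : ∀ i, 1 ≤ i → i + 2 ≤ k →
      IsTriangle M {x i, x (i+1), x (i+2)} ∨ IsTriad M {x i, x (i+1), x (i+2)}) :
    ∃ A' B', TwoSep M A' B' ∧ ∀ i, 1 ≤ i → i ≤ k → x i ∈ A' := by
  suffices h : ∀ n, n + 2 ≤ k →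
      ∃ A' B', TwoSep M A' B' ∧ ∀ i, 1 ≤ i → i ≤ n + 2 → x i ∈ A' by
    simpa [Nat.sub_add_cancel (by omega : 2 ≤ k)] using h (k - 2) (by omega)
  intro n
  induction n with
  | zero =>
    intro _
    obtain ⟨A', B', h, h1, h2⟩ := hAB.exists_pair_subset hs hcs (hx 1 le_rfl hk)
    refine ⟨A', B', h, fun i hi1 hi2 => ?_⟩
    obtain rfl | rfl : i = 1 ∨ i = 2 := by omega
    exacts [h1, h2]
  | succ n ih =>
    intro hn
    obtain ⟨A', B', h, hA'⟩ := ih (by omega)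
    obtain ⟨A'', B'', h', hA''⟩ := h.exists_insert_subset hs hcs (hx (n + 1) (by omega) hn)
      (hA' _ (by omega) (by omega)) (hA' _ (by omega) (by omega))
    refine ⟨A'', B'', h', fun i hi1 hi2 => hA'' ?_⟩
    obtain hi | rfl : i ≤ n + 2 ∨ i = n + 3 := by omega
    exacts [mem_insert_of_mem _ (hA' i hi1 hi), mem_insert _ _]

end TwoSeparations

theorem statement15_general {α : Type} (M : Matroid α) (hfin : M.E.Finite) (hs : SimpleM M) (hcs : CosimpleM M)
    (k : ℕ) (x : ℕ → α) (hfan : IsFan M k x)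
    (A B : Set α) (hAB : TwoSep M A B) :
    ∃ A' B', TwoSep M A' B' ∧ ∀ i, 1 ≤ i → i ≤ k → x i ∈ A' := by
  have : M.Finite := ⟨hfin⟩
  obtain ⟨hk, -, -, hx⟩ := hfan
  exact hAB.exists_forall_mem_of_triangle_or_triad hs hcs hk fun i hi hik => (hx i hi hik).1

/-- If `M` is a simple, cosimple, connected matroid with a fan `(x 1, …, x k)` and a
2-separation, then `M` has a 2-separation whose first side contains the fan. -/
theorem statement15 {α : Type} (M : Matroid α) (hfin : M.E.Finite) (hs : SimpleM M) (hcs : CosimpleM M)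
    (hconn : ConnectedM M) (k : ℕ) (x : ℕ → α) (hfan : IsFan M k x)
    (A B : Set α) (hAB : TwoSep M A B) :
    ∃ A' B', TwoSep M A' B' ∧ ∀ i, 1 ≤ i → i ≤ k → x i ∈ A' :=
  statement15_general M hfin hs hcs k x hfan A B hAB

end ExMinors
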